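/- Fix t ∈ (0, 1/2]. Then the map δ ↦ I_t(δ, δ) is decreasing in δ on [1, ∞), where I_t(δ,δ) is the Beta(δ,δ) c.d.f. at t. Consequently, for fixed n ≥ 2, the 1/n quantile κ_{n,d} of Beta((d-1)/2,(d-1)/2) is increasing in d. -/

import Mathlib

open MeasureTheory Real Set
open scoped ENNReal NNReal

/-- The Beta function `B(a,b)` as an integral. -/
noncomputable def betaFun (a b : ℝ) : ℝ :=
  ∫ x in (0:ℝ)..1, x ^ (a - 1) * (1 - x) ^ (b - 1)

/-- The Beta(a,b) probability measure on `ℝ`. -/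
noncomputable def betaMeasure (a b : ℝ) : Measure ℝ :=
  MeasureTheory.volume.withDensity
    (Set.indicator (Set.Ioo 0 1)
      (fun t => ENNReal.ofReal (t ^ (a - 1) * (1 - t) ^ (b - 1) / betaFun a b)))

/-- The regularised incomplete Beta function `I_x(a,b)`, with the convention that it is
`0` for `x ≤ 0` and `1` for `x ≥ 1`. -/
noncomputable def regIncBeta (a b x : ℝ) : ℝ :=
  if x ≤ 0 then 0 else if 1 ≤ x then 1
  else (∫ s in (0:ℝ)..x, s ^ (a - 1) * (1 - s) ^ (b - 1)) / betaFun a b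

/-- The uniform probability measure on the sphere of radius `a` centred at the origin
of `ℝ^d`, obtained by normalising the surface measure on the unit sphere and scaling. -/
noncomputable def sphereUniform (d : ℕ) (a : ℝ) : Measure (EuclideanSpace ℝ (Fin d)) :=
  Measure.map (fun x => a • x)
    ((((MeasureTheory.volume : Measure (EuclideanSpace ℝ (Fin d))).toSphere Set.univ)⁻¹) •
      Measure.map Subtype.val
        ((MeasureTheory.volume : Measure (EuclideanSpace ℝ (Fin d))).toSphere))

/-!
On `[0, 1]` the Beta(δ, δ) density is proportional to `(x (1 - x))^(δ - 1)`, so raising `δ₁` to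
`δ₂` multiplies the density by the weight `w = (x (1 - x))^(δ₂ - δ₁)`, which is symmetric about
`1/2` and increasing on `[0, 1/2]`. Splitting `[0, 1]` into `[0, t]`, `[t, 1 - t]`, `[1 - t, 1]`,
the weight is at most `w t` on the two tails and at least `w t` in the middle, so the tail mass
`I_t` can only decrease. Since `I_t(δ, δ)` is strictly increasing in `t`, its `1/n` quantile
must then move to the right as `δ` grows.
-/

open intervalIntegral

lemma continuous_rpow_mul_one_sub_rpow {a b : ℝ} (ha : 0 ≤ a) (hb : 0 ≤ b) :
    Continuous fun x : ℝ => x ^ a * (1 - x) ^ b :=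
  (continuous_rpow_const ha).mul
    ((continuous_rpow_const hb).comp (continuous_const.sub continuous_id))

lemma integral_rpow_mul_one_sub_rpow_pos {a b s u : ℝ} (ha : 0 ≤ a) (hb : 0 ≤ b) (hs : 0 ≤ s)
    (hsu : s < u) (hu : u ≤ 1) : 0 < ∫ x in s..u, x ^ a * (1 - x) ^ b :=
  intervalIntegral_pos_of_pos_on ((continuous_rpow_mul_one_sub_rpow ha hb).intervalIntegrable _ _)
    (fun x hx => mul_pos (rpow_pos_of_pos (hs.trans_lt hx.1) _)
      (rpow_pos_of_pos (by linarith [hx.2]) _)) hsu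

lemma betaFun_pos {a b : ℝ} (ha : 1 ≤ a) (hb : 1 ≤ b) : 0 < betaFun a b :=
  integral_rpow_mul_one_sub_rpow_pos (sub_nonneg.2 ha) (sub_nonneg.2 hb) le_rfl one_pos le_rfl

lemma regIncBeta_of_mem_Ioo {a b x : ℝ} (hx : x ∈ Ioo (0 : ℝ) 1) :
    regIncBeta a b x = (∫ s in (0 : ℝ)..x, s ^ (a - 1) * (1 - s) ^ (b - 1)) / betaFun a b := by
  rw [regIncBeta, if_neg hx.1.not_ge, if_neg hx.2.not_ge]

lemma regIncBeta_strictMonoOn {a b : ℝ} (ha : 1 ≤ a) (hb : 1 ≤ b) :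
    StrictMonoOn (regIncBeta a b) (Ioo 0 1) := by
  intro x hx y hy hxy
  have hcont := continuous_rpow_mul_one_sub_rpow (sub_nonneg.2 ha) (sub_nonneg.2 hb)
  rw [regIncBeta_of_mem_Ioo hx, regIncBeta_of_mem_Ioo hy,
    div_lt_div_iff_of_pos_right (betaFun_pos ha hb),
    ← integral_add_adjacent_intervals (hcont.intervalIntegrable 0 x) (hcont.intervalIntegrable x y)]
  exact lt_add_of_pos_right _
    (integral_rpow_mul_one_sub_rpow_pos (sub_nonneg.2 ha) (sub_nonneg.2 hb) hx.1.le hxy hy.2.le)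

lemma integral_congr_of_eqOn_unitInterval {f g : ℝ → ℝ} (h : EqOn f g (Icc 0 1)) {u : ℝ}
    (hu : u ∈ Icc (0 : ℝ) 1) : ∫ x in (0 : ℝ)..u, f x = ∫ x in (0 : ℝ)..u, g x :=
  integral_congr fun x hx => h <| by
    rw [uIcc_of_le hu.1] at hx
    exact ⟨hx.1, hx.2.trans hu.2⟩

lemma integral_eq_two_mul_add_of_symm {g : ℝ → ℝ} (hg : Continuous g)
    (hsymm : ∀ x, g (1 - x) = g x) (t : ℝ) :
    ∫ x in (0 : ℝ)..1, g x = 2 * (∫ x in (0 : ℝ)..t, g x) + ∫ x in t..(1 - t), g x := by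
  have htail : ∫ x in (1 - t)..1, g x = ∫ x in (0 : ℝ)..t, g x := by
    simpa only [hsymm, sub_zero] using (integral_comp_sub_left (a := 0) (b := t) g 1).symm
  rw [← integral_add_adjacent_intervals (hg.intervalIntegrable 0 (1 - t))
      (hg.intervalIntegrable _ 1),
    ← integral_add_adjacent_intervals (hg.intervalIntegrable 0 t) (hg.intervalIntegrable t _),
    htail]
  ring

lemma le_of_monotoneOn_of_symm {w : ℝ → ℝ} (hmono : MonotoneOn w (Icc 0 (1 / 2)))
    (hsymm : ∀ x, w (1 - x) = w x) {t x : ℝ} (ht : 0 ≤ t) (hx : x ∈ Icc t (1 - t)) :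
    w t ≤ w x := by
  rcases le_total x (1 / 2) with hx' | hx'
  · exact hmono ⟨ht, hx.1.trans hx'⟩ ⟨ht.trans hx.1, hx'⟩ hx.1
  · rw [← hsymm x]
    exact hmono ⟨ht, by linarith [hx.1, hx.2]⟩ ⟨by linarith [hx.2], by linarith⟩
      (by linarith [hx.2])

lemma div_two_mul_add_le_div_two_mul_add {A M A' M' c : ℝ} (hA : 0 ≤ A) (hM : 0 ≤ M)
    (hA' : 0 ≤ A') (hM' : 0 ≤ M') (hA'A : A' ≤ c * A) (hMM' : c * M ≤ M') :
    A' / (2 * A' + M') ≤ A / (2 * A + M) := by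
  rcases (by positivity : 0 ≤ 2 * A' + M').eq_or_lt with hden' | hden'
  · rw [← hden', div_zero]
    positivity
  rcases (by positivity : 0 ≤ 2 * A + M).eq_or_lt with hden | hden
  · have hA0 : A = 0 := by linarith
    have hA'0 : A' = 0 := by rw [hA0, mul_zero] at hA'A; linarith
    rw [hA0, hA'0, zero_div, zero_div]
  rw [div_le_div_iff₀ hden' hden]
  nlinarith [mul_le_mul_of_nonneg_right hA'A hM, mul_le_mul_of_nonneg_left hMM' hA]

/-- Chebyshev-type inequality: reweighting a symmetric density by a symmetric weight that is
increasing towards `1/2` moves mass away from the tail `[0, t]`. -/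
lemma integral_mul_div_integral_mul_le {f w : ℝ → ℝ} {t : ℝ} (hf : Continuous f)
    (hw : Continuous w) (hf_symm : ∀ x, f (1 - x) = f x) (hw_symm : ∀ x, w (1 - x) = w x)
    (hf_nonneg : ∀ x ∈ Icc (0 : ℝ) 1, 0 ≤ f x) (hw_nonneg : ∀ x ∈ Icc (0 : ℝ) 1, 0 ≤ w x)
    (hw_mono : MonotoneOn w (Icc 0 (1 / 2))) (ht₀ : 0 ≤ t) (ht : t ≤ 1 / 2) :
    (∫ x in (0 : ℝ)..t, f x * w x) / (∫ x in (0 : ℝ)..1, f x * w x) ≤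
      (∫ x in (0 : ℝ)..t, f x) / ∫ x in (0 : ℝ)..1, f x := by
  have hfw : Continuous fun x => f x * w x := hf.mul hw
  have htail : ∀ x ∈ Icc 0 t, x ∈ Icc (0 : ℝ) 1 := fun x hx => ⟨hx.1, by linarith [hx.2]⟩
  have hmid : ∀ x ∈ Icc t (1 - t), x ∈ Icc (0 : ℝ) 1 :=
    fun x hx => ⟨by linarith [hx.1], by linarith [hx.2]⟩
  have hmid_le : t ≤ 1 - t := by linarith
  rw [integral_eq_two_mul_add_of_symm hfw (fun x => by rw [hf_symm, hw_symm]) t,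
    integral_eq_two_mul_add_of_symm hf hf_symm t]
  refine div_two_mul_add_le_div_two_mul_add (c := w t)
    (integral_nonneg ht₀ fun x hx => hf_nonneg x (htail x hx))
    (integral_nonneg hmid_le fun x hx => hf_nonneg x (hmid x hx))
    (integral_nonneg ht₀ fun x hx =>
      mul_nonneg (hf_nonneg x (htail x hx)) (hw_nonneg x (htail x hx)))
    (integral_nonneg hmid_le fun x hx =>
      mul_nonneg (hf_nonneg x (hmid x hx)) (hw_nonneg x (hmid x hx))) ?_ ?_
  · rw [← intervalIntegral.integral_const_mul]
    refine integral_mono_on ht₀ (hfw.intervalIntegrable _ _)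
      ((continuous_const.mul hf).intervalIntegrable _ _) fun x hx => ?_
    rw [mul_comm (w t)]
    exact mul_le_mul_of_nonneg_left (hw_mono ⟨hx.1, hx.2.trans ht⟩ ⟨ht₀, ht⟩ hx.2)
      (hf_nonneg x (htail x hx))
  · rw [← intervalIntegral.integral_const_mul]
    refine integral_mono_on hmid_le ((continuous_const.mul hf).intervalIntegrable _ _)
      (hfw.intervalIntegrable _ _) fun x hx => ?_
    rw [mul_comm (w t)]
    exact mul_le_mul_of_nonneg_left (le_of_monotoneOn_of_symm hw_mono hw_symm ht₀ hx)
      (hf_nonneg x (hmid x hx))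

section SymmetricPower

variable {p : ℝ}

lemma continuous_mul_one_sub_rpow (hp : 0 ≤ p) : Continuous fun x : ℝ => (x * (1 - x)) ^ p :=
  (continuous_rpow_const hp).comp (continuous_id.mul (continuous_const.sub continuous_id))

lemma mul_one_sub_rpow_symm (x : ℝ) : ((1 - x) * (1 - (1 - x))) ^ p = (x * (1 - x)) ^ p := by
  rw [sub_sub_cancel, mul_comm]

lemma mul_one_sub_rpow_nonneg {x : ℝ} (hx : x ∈ Icc (0 : ℝ) 1) : 0 ≤ (x * (1 - x)) ^ p :=
  rpow_nonneg (mul_nonneg hx.1 (sub_nonneg.2 hx.2)) _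

lemma monotoneOn_mul_one_sub_rpow (hp : 0 ≤ p) :
    MonotoneOn (fun x : ℝ => (x * (1 - x)) ^ p) (Icc 0 (1 / 2)) :=
  fun x hx y hy hxy => rpow_le_rpow (mul_nonneg hx.1 (by linarith [hx.2]))
    (by nlinarith [hx.1, hy.2]) hp

end SymmetricPower

lemma regIncBeta_self_eq {δ t : ℝ} (ht : t ∈ Ioo (0 : ℝ) 1) :
    regIncBeta δ δ t =
      (∫ x in (0 : ℝ)..t, (x * (1 - x)) ^ (δ - 1)) /
        ∫ x in (0 : ℝ)..1, (x * (1 - x)) ^ (δ - 1) := by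
  have hdensity : EqOn (fun x : ℝ => x ^ (δ - 1) * (1 - x) ^ (δ - 1))
      (fun x => (x * (1 - x)) ^ (δ - 1)) (Icc 0 1) :=
    fun x hx => (mul_rpow hx.1 (sub_nonneg.2 hx.2)).symm
  rw [regIncBeta_of_mem_Ioo ht, betaFun,
    integral_congr_of_eqOn_unitInterval hdensity ⟨ht.1.le, ht.2.le⟩,
    integral_congr_of_eqOn_unitInterval hdensity ⟨zero_le_one, le_rfl⟩]

theorem regIncBeta_self_antitoneOn {t : ℝ} (ht : t ∈ Ioc (0 : ℝ) (1 / 2)) :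
    AntitoneOn (fun δ => regIncBeta δ δ t) (Ici 1) := by
  intro δ₁ h₁ δ₂ _ h₁₂
  have h₁' : 0 ≤ δ₁ - 1 := sub_nonneg.2 h₁
  have h₁₂' : 0 ≤ δ₂ - δ₁ := sub_nonneg.2 h₁₂
  have hfactor : EqOn (fun x : ℝ => (x * (1 - x)) ^ (δ₂ - 1))
      (fun x => (x * (1 - x)) ^ (δ₁ - 1) * (x * (1 - x)) ^ (δ₂ - δ₁)) (Icc 0 1) := fun x hx => by
    dsimp only
    rw [← rpow_add_of_nonneg (mul_nonneg hx.1 (sub_nonneg.2 hx.2)) h₁' h₁₂']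
    ring_nf
  have ht' : t ∈ Ioo (0 : ℝ) 1 := ⟨ht.1, by linarith [ht.2]⟩
  dsimp only
  rw [regIncBeta_self_eq ht', regIncBeta_self_eq ht',
    integral_congr_of_eqOn_unitInterval hfactor ⟨ht'.1.le, ht'.2.le⟩,
    integral_congr_of_eqOn_unitInterval hfactor ⟨zero_le_one, le_rfl⟩]
  exact integral_mul_div_integral_mul_le (continuous_mul_one_sub_rpow h₁')
    (continuous_mul_one_sub_rpow h₁₂') mul_one_sub_rpow_symm mul_one_sub_rpow_symm
    (fun _ => mul_one_sub_rpow_nonneg) (fun _ => mul_one_sub_rpow_nonneg)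
    (monotoneOn_mul_one_sub_rpow h₁₂') ht.1.le ht.2

lemma le_of_regIncBeta_self_eq {δ₁ δ₂ κ₁ κ₂ : ℝ} (h₁ : 1 ≤ δ₁) (h₁₂ : δ₁ ≤ δ₂)
    (hκ₁ : κ₁ ∈ Ioc (0 : ℝ) (1 / 2)) (hκ₂ : κ₂ ∈ Ioc (0 : ℝ) (1 / 2))
    (heq : regIncBeta δ₁ δ₁ κ₁ = regIncBeta δ₂ δ₂ κ₂) : κ₁ ≤ κ₂ := by
  by_contra! hlt
  have h₂ : 1 ≤ δ₂ := h₁.trans h₁₂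
  have hstrict := regIncBeta_strictMonoOn h₂ h₂ ⟨hκ₂.1, by linarith [hκ₂.2]⟩
    ⟨hκ₁.1, by linarith [hκ₁.2]⟩ hlt
  have hanti : regIncBeta δ₂ δ₂ κ₁ ≤ regIncBeta δ₁ δ₁ κ₁ :=
    regIncBeta_self_antitoneOn hκ₁ h₁ (mem_Ici.2 h₂) h₁₂
  linarith

/-- For fixed `t ∈ (0,1/2]`, `δ ↦ I_t(δ,δ)` is decreasing on `[1,∞)`;
consequently, for fixed `n ≥ 2`, the `1/n` quantile `κ_{n,d}` of
`Beta((d-1)/2,(d-1)/2)` is increasing in `d` (for `d ≥ 3`). -/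
theorem stmt15 :
    (∀ t ∈ Set.Ioc (0:ℝ) (1/2), ∀ δ₁ δ₂ : ℝ, 1 ≤ δ₁ → δ₁ ≤ δ₂ →
      regIncBeta δ₂ δ₂ t ≤ regIncBeta δ₁ δ₁ t) ∧
    (∀ n : ℕ, 2 ≤ n → ∀ d₁ d₂ : ℕ, 3 ≤ d₁ → d₁ ≤ d₂ →
      ∀ κ₁ κ₂ : ℝ, κ₁ ∈ Set.Ioc (0:ℝ) (1/2) → κ₂ ∈ Set.Ioc (0:ℝ) (1/2) →
        regIncBeta (((d₁:ℝ) - 1)/2) (((d₁:ℝ) - 1)/2) κ₁ = 1/(n:ℝ) →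
        regIncBeta (((d₂:ℝ) - 1)/2) (((d₂:ℝ) - 1)/2) κ₂ = 1/(n:ℝ) →
        κ₁ ≤ κ₂) := by
  refine ⟨fun t ht δ₁ δ₂ h₁ h₁₂ => regIncBeta_self_antitoneOn ht h₁ (h₁.trans h₁₂) h₁₂, ?_⟩
  intro n _ d₁ d₂ hd₁ hd₁₂ κ₁ κ₂ hκ₁ hκ₂ he₁ he₂
  have hd₁' : (3 : ℝ) ≤ d₁ := by exact_mod_cast hd₁
  have hd₁₂' : (d₁ : ℝ) ≤ d₂ := by exact_mod_cast hd₁₂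
  exact le_of_regIncBeta_self_eq (by linarith) (by linarith) hκ₁ hκ₂ (he₁.trans he₂.symm)
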